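/- The syntactic ordering on parametric expressions implies the semantic ordering: if E₁ ⊑ E₂ in the inductively defined syntactic order (basic elements ordered as specified, MAX{E_{1.1},…,E_{1.n}} ⊑ MAX{E_{2.1},…,E_{2.m}} iff ∀i ∃j. E_{1.i} ⊑ E_{2.j}, and MIN{E_{1.1},…,E_{1.n}} ⊑ MIN{E_{2.1},…,E_{2.m}} iff ∀j ∃i. E_{1.i} ⊑ E_{2.j}), then ⟦E₁⟧(v) ≤ ⟦E₂⟧(v) for every parameter valuation v. -/

import Mathlib

open scoped NNReal ENNReal

/-- Parametric expressions over a finite parameter set `P`: `∞`, basic terms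
`|(Σᵢ aᵢ·pᵢ + b)/w − 1|` (with `aᵢ ∈ ℕ`, `b ∈ ℚ≥0`, `w ∈ ℚ≥0`), and finite
`MIN`s and `MAX`es. -/
inductive PExpr (P : Type) where
  | inf : PExpr P
  | basic (a : P → ℕ) (b : ℚ≥0) (w : ℚ≥0) : PExpr P
  | MIN (l : List (PExpr P)) : PExpr P
  | MAX (l : List (PExpr P)) : PExpr P

namespace PExpr

variable {P : Type} [Fintype P]

/-- The value of the linear expression `Σᵢ aᵢ·pᵢ + b` under a valuation `v`. -/
def lin (a : P → ℕ) (b : ℚ≥0) (v : P → ℚ≥0) : ℚ≥0 := (∑ p, (a p : ℚ≥0) * v p) + b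

mutual
  /-- Evaluation of a parametric expression under a parameter valuation `v`. -/
  noncomputable def eval (v : P → ℚ≥0) : PExpr P → ℝ≥0∞
    | .inf => ⊤
    | .basic a b w => ENNReal.ofReal |((lin a b v : ℚ≥0) : ℝ) / (w : ℝ) - 1|
    | .MIN l => evalMin v l
    | .MAX l => evalMax v l
  /-- Evaluation of a `MIN` of a list of expressions (`⊤` for the empty list). -/
  noncomputable def evalMin (v : P → ℚ≥0) : List (PExpr P) → ℝ≥0∞
    | [] => ⊤
    | e :: l => min (eval v e) (evalMin v l)
  /-- Evaluation of a `MAX` of a list of expressions (`⊥` for the empty list). -/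
  noncomputable def evalMax (v : P → ℚ≥0) : List (PExpr P) → ℝ≥0∞
    | [] => ⊥
    | e :: l => max (eval v e) (evalMax v l)
end

/- The syntactic ordering `⊑` on parametric expressions. -/
mutual
  /-- The syntactic ordering `⊑` on parametric expressions:
  `MAX l₁ ⊑ MAX l₂` iff every element of `l₁` is `⊑` some element of `l₂`, and
  `MIN l₁ ⊑ MIN l₂` iff every element of `l₂` is `⊒` some element of `l₁`. -/
  inductive SynLe : PExpr P → PExpr P → Prop
    | basic_inf (a : P → ℕ) (b w : ℚ≥0) : SynLe (.basic a b w) .inf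
    | inf_inf : SynLe .inf .inf
    | basic_ge (a a' : P → ℕ) (b b' w : ℚ≥0) :
        1 ≤ b / w → 1 ≤ b' / w → (∀ i, a i ≤ a' i) → b ≤ b' →
        SynLe (.basic a b w) (.basic a' b' w)
    | basic_eq (a : P → ℕ) (b w : ℚ≥0) : SynLe (.basic a b w) (.basic a b w)
    | max_le (l₁ l₂ : List (PExpr P)) : Below l₁ l₂ → SynLe (.MAX l₁) (.MAX l₂)
    | min_le (l₁ l₂ : List (PExpr P)) : Above l₂ l₁ → SynLe (.MIN l₁) (.MIN l₂)

  /-- `Below l₁ l₂`: every element of `l₁` is `⊑` some element of `l₂`. -/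
  inductive Below : List (PExpr P) → List (PExpr P) → Prop
    | nil (l₂ : List (PExpr P)) : Below [] l₂
    | cons (e : PExpr P) (l₁ l₂ : List (PExpr P)) :
        LeSome e l₂ → Below l₁ l₂ → Below (e :: l₁) l₂

  /-- `LeSome e l`: `e` is `⊑` some element of `l`. -/
  inductive LeSome : PExpr P → List (PExpr P) → Prop
    | head (e e' : PExpr P) (l : List (PExpr P)) : SynLe e e' → LeSome e (e' :: l)
    | tail (e e' : PExpr P) (l : List (PExpr P)) : LeSome e l → LeSome e (e' :: l)

  /-- `Above l₂ l₁`: every element of `l₂` is `⊒` some element of `l₁`. -/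
  inductive Above : List (PExpr P) → List (PExpr P) → Prop
    | nil (l : List (PExpr P)) : Above [] l
    | cons (e' : PExpr P) (l₂ l₁ : List (PExpr P)) :
        SomeLe l₁ e' → Above l₂ l₁ → Above (e' :: l₂) l₁

  /-- `SomeLe l e'`: some element of `l` is `⊑ e'`. -/
  inductive SomeLe : List (PExpr P) → PExpr P → Prop
    | head (e : PExpr P) (l : List (PExpr P)) (e' : PExpr P) :
        SynLe e e' → SomeLe (e :: l) e'
    | tail (e : PExpr P) (l : List (PExpr P)) (e' : PExpr P) :
        SomeLe l e' → SomeLe (e :: l) e'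
end

end PExpr

theorem abs_sub_one_le_abs_sub_one {x y : ℝ} (hx : 1 ≤ x) (hxy : x ≤ y) :
    |x - 1| ≤ |y - 1| := by
  rw [abs_of_nonneg (by linarith), abs_of_nonneg (by linarith)]
  linarith

namespace PExpr

variable {P : Type} [Fintype P]

theorem le_lin (a : P → ℕ) (b : ℚ≥0) (v : P → ℚ≥0) : b ≤ lin a b v :=
  le_add_of_nonneg_left zero_le

theorem lin_mono {a a' : P → ℕ} {b b' : ℚ≥0} (ha : ∀ i, a i ≤ a' i) (hb : b ≤ b')
    (v : P → ℚ≥0) : lin a b v ≤ lin a' b' v :=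
  add_le_add (Finset.sum_le_sum fun p _ => mul_le_mul_of_nonneg_right (mod_cast ha p) zero_le) hb

theorem eval_basic_le_eval_basic {a a' : P → ℕ} {b b' w : ℚ≥0} (hbw : 1 ≤ b / w)
    (ha : ∀ i, a i ≤ a' i) (hb : b ≤ b') (v : P → ℚ≥0) :
    eval v (.basic a b w) ≤ eval v (.basic a' b' w) := by
  have hbw_real : (1 : ℝ) ≤ (b : ℝ) / w := mod_cast hbw
  have hlin : (b : ℝ) ≤ lin a b v := mod_cast le_lin a b v
  have hlin' : ((lin a b v : ℚ≥0) : ℝ) ≤ lin a' b' v := mod_cast lin_mono ha hb v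
  refine ENNReal.ofReal_le_ofReal (abs_sub_one_le_abs_sub_one ?_ ?_)
  · exact hbw_real.trans (by gcongr)
  · gcongr

variable (v : P → ℚ≥0)

mutual

theorem SynLe.eval_le {E₁ E₂ : PExpr P} : SynLe E₁ E₂ → eval v E₁ ≤ eval v E₂
  | .basic_inf .. => le_top
  | .inf_inf => le_rfl
  | .basic_ge _ _ _ _ _ hbw _ ha hb => eval_basic_le_eval_basic hbw ha hb v
  | .basic_eq .. => le_rfl
  | .max_le _ _ h => h.evalMax_le
  | .min_le _ _ h => h.evalMin_le

theorem Below.evalMax_le {l₁ l₂ : List (PExpr P)} :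
    Below l₁ l₂ → evalMax v l₁ ≤ evalMax v l₂
  | .nil _ => bot_le
  | .cons _ _ _ he hl => max_le he.eval_le_evalMax hl.evalMax_le

theorem LeSome.eval_le_evalMax {e : PExpr P} {l : List (PExpr P)} :
    LeSome e l → eval v e ≤ evalMax v l
  | .head _ _ _ h => le_max_of_le_left h.eval_le
  | .tail _ _ _ h => le_max_of_le_right h.eval_le_evalMax

theorem Above.evalMin_le {l₂ l₁ : List (PExpr P)} :
    Above l₂ l₁ → evalMin v l₁ ≤ evalMin v l₂
  | .nil _ => le_top
  | .cons _ _ _ he hl => le_min he.evalMin_le_eval hl.evalMin_le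

theorem SomeLe.evalMin_le_eval {l : List (PExpr P)} {e : PExpr P} :
    SomeLe l e → evalMin v l ≤ eval v e
  | .head _ _ _ h => min_le_of_left_le h.eval_le
  | .tail _ _ _ h => min_le_of_right_le h.evalMin_le_eval

end

end PExpr

/-- the syntactic ordering on parametric expressions implies the
semantic ordering: `E₁ ⊑ E₂` implies `⟦E₁⟧(v) ≤ ⟦E₂⟧(v)` for every valuation. -/
theorem stmt16 {P : Type} [Fintype P] (E₁ E₂ : PExpr P) (h : PExpr.SynLe E₁ E₂) :
    ∀ v : P → ℚ≥0, PExpr.eval v E₁ ≤ PExpr.eval v E₂ :=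
  fun v => h.eval_le v
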